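/- Let P be the K-subalgebra of U_q^+(B_2) generated by e1^l, e2^l, e3^l and z. Then P is contained in the center of U_q^+(B_2), and U_q^+(B_2) is a finitely generated P-module; more precisely, U_q^+(B_2) is spanned as a P-module by the finitely many monomials e3^b·e1^c·e2^d with 0 ≤ b, c, d ≤ l-1. -/
import Mathlib


noncomputable section

open MulOpposite

/-- The defining relations of `U_q^+(B_2)` on the free algebra on generators
`e1 = ι 0`, `e2 = ι 1`, `e3 = ι 2`, `z = ι 3`. -/
inductive UqB2Rel (K : Type*) [Field K] (q : K) :
    FreeAlgebra K (Fin 4) → FreeAlgebra K (Fin 4) → Prop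
  | e1z : UqB2Rel K q (FreeAlgebra.ι K 0 * FreeAlgebra.ι K 3)
      (FreeAlgebra.ι K 3 * FreeAlgebra.ι K 0)
  | e2z : UqB2Rel K q (FreeAlgebra.ι K 1 * FreeAlgebra.ι K 3)
      (FreeAlgebra.ι K 3 * FreeAlgebra.ι K 1)
  | e3z : UqB2Rel K q (FreeAlgebra.ι K 2 * FreeAlgebra.ι K 3)
      (FreeAlgebra.ι K 3 * FreeAlgebra.ι K 2)
  | e1e3 : UqB2Rel K q (FreeAlgebra.ι K 0 * FreeAlgebra.ι K 2)
      (q⁻¹ ^ 2 • (FreeAlgebra.ι K 2 * FreeAlgebra.ι K 0))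
  | e2e3 : UqB2Rel K q (FreeAlgebra.ι K 1 * FreeAlgebra.ι K 2)
      (q ^ 2 • (FreeAlgebra.ι K 2 * FreeAlgebra.ι K 1) + FreeAlgebra.ι K 3)
  | e2e1 : UqB2Rel K q (FreeAlgebra.ι K 1 * FreeAlgebra.ι K 0)
      (q⁻¹ ^ 2 • (FreeAlgebra.ι K 0 * FreeAlgebra.ι K 1) - q⁻¹ ^ 2 • FreeAlgebra.ι K 2)

/-- `U_q^+(B_2)`, presented by generators `e1, e2, e3, z` and the relations above. -/
abbrev UqB2 (K : Type*) [Field K] (q : K) : Type _ := RingQuot (UqB2Rel K q)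

variable (K : Type*) [Field K] (q : K)

/-- The generator `e1` of `U_q^+(B_2)`. -/
def Ue1 : UqB2 K q := RingQuot.mkAlgHom K (UqB2Rel K q) (FreeAlgebra.ι K 0)
/-- The generator `e2` of `U_q^+(B_2)`. -/
def Ue2 : UqB2 K q := RingQuot.mkAlgHom K (UqB2Rel K q) (FreeAlgebra.ι K 1)
/-- The generator `e3` of `U_q^+(B_2)`. -/
def Ue3 : UqB2 K q := RingQuot.mkAlgHom K (UqB2Rel K q) (FreeAlgebra.ι K 2)
/-- The generator `z` of `U_q^+(B_2)`. -/
def Uz : UqB2 K q := RingQuot.mkAlgHom K (UqB2Rel K q) (FreeAlgebra.ι K 3)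


namespace Stmt3Aux

variable {K : Type*} [Field K] {q : K}

local notation "E₁" => Ue1 K q
local notation "E₂" => Ue2 K q
local notation "E₃" => Ue3 K q
local notation "Z" => Uz K q

lemma rel_e1z : E₁ * Z = Z * E₁ := by
  simpa only [Ue1, Uz, map_mul] using RingQuot.mkAlgHom_rel K (UqB2Rel.e1z (q := q))

lemma rel_e2z : E₂ * Z = Z * E₂ := by
  simpa only [Ue2, Uz, map_mul] using RingQuot.mkAlgHom_rel K (UqB2Rel.e2z (q := q))

lemma rel_e3z : E₃ * Z = Z * E₃ := by
  simpa only [Ue3, Uz, map_mul] using RingQuot.mkAlgHom_rel K (UqB2Rel.e3z (q := q))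

lemma rel_e1e3 : E₁ * E₃ = q⁻¹ ^ 2 • (E₃ * E₁) := by
  simpa only [Ue1, Ue3, map_mul, map_smul] using RingQuot.mkAlgHom_rel K (UqB2Rel.e1e3 (q := q))

lemma rel_e2e3 : E₂ * E₃ = q ^ 2 • (E₃ * E₂) + Z := by
  simpa only [Ue2, Ue3, Uz, map_mul, map_smul, map_add] using
    RingQuot.mkAlgHom_rel K (UqB2Rel.e2e3 (q := q))

lemma rel_e2e1 : E₂ * E₁ = q⁻¹ ^ 2 • (E₁ * E₂) - q⁻¹ ^ 2 • E₃ := by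
  simpa only [Ue1, Ue2, Ue3, map_mul, map_smul, map_sub] using
    RingQuot.mkAlgHom_rel K (UqB2Rel.e2e1 (q := q))

lemma adjoin_gens_eq_top :
    Algebra.adjoin K ({E₁, E₂, E₃, Z} : Set (UqB2 K q)) = ⊤ := by
  rw [eq_top_iff]
  rintro x -
  obtain ⟨y, rfl⟩ := RingQuot.mkAlgHom_surjective K (UqB2Rel K q) x
  have hy : y ∈ Algebra.adjoin K (Set.range (FreeAlgebra.ι K)) := by
    rw [FreeAlgebra.adjoin_range_ι]; trivial
  induction hy using Algebra.adjoin_induction with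
  | mem a ha =>
    obtain ⟨i, rfl⟩ := ha
    fin_cases i
    · exact Algebra.subset_adjoin (by left; rfl)
    · exact Algebra.subset_adjoin (by right; left; rfl)
    · exact Algebra.subset_adjoin (by right; right; left; rfl)
    · exact Algebra.subset_adjoin (by right; right; right; rfl)
  | algebraMap r => rw [AlgHom.commutes]; exact Subalgebra.algebraMap_mem _ r
  | add a b _ _ ha hb => rw [map_add]; exact add_mem ha hb
  | mul a b _ _ ha hb => rw [map_mul]; exact mul_mem ha hb

lemma mem_center_of_commutes (x : UqB2 K q) (h1 : E₁ * x = x * E₁)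
    (h2 : E₂ * x = x * E₂) (h3 : E₃ * x = x * E₃) (hz : Z * x = x * Z) :
    x ∈ Subalgebra.center K (UqB2 K q) := by
  rw [Subalgebra.mem_center_iff]
  intro b
  have hb : b ∈ Algebra.adjoin K ({E₁, E₂, E₃, Z} : Set (UqB2 K q)) := by
    rw [adjoin_gens_eq_top]; trivial
  induction hb using Algebra.adjoin_induction with
  | mem a ha =>
    rcases ha with rfl | rfl | rfl | rfl
    exacts [h1, h2, h3, hz]
  | algebraMap r => rw [← Algebra.commutes]
  | add a b _ _ ha hb => rw [add_mul, mul_add, ha, hb]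
  | mul a b _ _ ha hb => rw [mul_assoc, hb, ← mul_assoc, ha, mul_assoc]

lemma z_center : Z ∈ Subalgebra.center K (UqB2 K q) :=
  mem_center_of_commutes _ rel_e1z rel_e2z rel_e3z rfl

end Stmt3Aux

namespace Stmt3Aux2
end Stmt3Aux2

namespace Stmt3Aux
variable {K : Type*} [Field K] {q : K}
-- reopen notation
local notation "E₁" => Ue1 K q
local notation "E₂" => Ue2 K q
local notation "E₃" => Ue3 K q
local notation "Z" => Uz K q

section Rel

lemma rel_e3e1 (huw : q⁻¹ ^ 2 * q ^ 2 = 1) : E₃ * E₁ = q ^ 2 • (E₁ * E₃) := by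
  rw [rel_e1e3, smul_smul, mul_comm, huw, one_smul]

lemma rel_e3e2 (huw : q⁻¹ ^ 2 * q ^ 2 = 1) : E₃ * E₂ = q⁻¹ ^ 2 • (E₂ * E₃) - q⁻¹ ^ 2 • Z := by
  rw [rel_e2e3, smul_add, smul_smul, huw, one_smul, add_sub_cancel_right]

lemma rel_e1e2 (huw : q⁻¹ ^ 2 * q ^ 2 = 1) : E₁ * E₂ = q ^ 2 • (E₂ * E₁) + E₃ := by
  rw [rel_e2e1, smul_sub, smul_smul, smul_smul, mul_comm (q^2), huw, one_smul, one_smul, sub_add_cancel]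

end Rel

lemma e1_pow_e3 (n : ℕ) : E₁^n * E₃ = ((q⁻¹^2)^n) • (E₃ * E₁^n) := by
  induction n with
  | zero => simp
  | succ n ih =>
    rw [pow_succ, mul_assoc, rel_e1e3, mul_smul_comm, ← mul_assoc, ih]
    simp only [smul_mul_assoc, smul_smul, mul_assoc, ← pow_succ]
    match_scalars <;> ring1

lemma e3_pow_e1 (huw : q⁻¹ ^ 2 * q ^ 2 = 1) (n : ℕ) :
    E₃^n * E₁ = ((q^2)^n) • (E₁ * E₃^n) := by
  induction n with
  | zero => simp
  | succ n ih =>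
    rw [pow_succ, mul_assoc, rel_e3e1 huw, mul_smul_comm, ← mul_assoc, ih]
    simp only [smul_mul_assoc, smul_smul, mul_assoc, ← pow_succ]
    match_scalars <;> ring1

lemma e2_pow_e3 (n : ℕ) : (q^2 - 1) • (E₂ * E₃^(n+1)) =
    ((q^2-1) * (q^2)^(n+1)) • (E₃^(n+1) * E₂) + ((q^2)^(n+1) - 1) • (E₃^n * Z) := by
  induction n with
  | zero => simp only [zero_add, pow_one, pow_zero, one_mul, rel_e2e3]; match_scalars <;> ring1
  | succ n ih =>
    have h1 : E₂ * E₃^(n+1+1) = (E₂ * E₃^(n+1)) * E₃ := by rw [pow_succ, ← mul_assoc]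
    rw [h1, ← smul_mul_assoc, ih, add_mul, smul_mul_assoc, smul_mul_assoc,
      mul_assoc, rel_e2e3, mul_assoc, ← rel_e3z]
    simp only [mul_add, mul_smul_comm, smul_add, smul_smul, ← mul_assoc, ← pow_succ]
    match_scalars <;> ring1

lemma e3_pow_e2 (huw : q⁻¹ ^ 2 * q ^ 2 = 1) (n : ℕ) :
    (q^2 - 1) • (E₃ * E₂^(n+1)) =
      ((q^2-1) * (q⁻¹^2)^(n+1)) • (E₂^(n+1) * E₃) - (1 - (q⁻¹^2)^(n+1)) • (E₂^n * Z) := by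
  induction n with
  | zero =>
    simp only [zero_add, pow_one, pow_zero, one_mul, rel_e3e2 huw]
    match_scalars
    any_goals ring1
    all_goals linear_combination (-1 : K) * huw
  | succ n ih =>
    have h1 : E₃ * E₂^(n+1+1) = (E₃ * E₂^(n+1)) * E₂ := by rw [pow_succ, ← mul_assoc]
    rw [h1, ← smul_mul_assoc, ih, sub_mul, smul_mul_assoc, smul_mul_assoc,
      mul_assoc, rel_e3e2 huw, mul_assoc, ← rel_e2z]
    simp only [mul_sub, mul_smul_comm, smul_sub, smul_smul, ← mul_assoc, ← pow_succ]
    match_scalars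
    any_goals ring1
    all_goals linear_combination (-(q⁻¹^2)^(n+1)) * huw

lemma e2_pow_e1 (huw : q⁻¹ ^ 2 * q ^ 2 = 1) (n : ℕ) :
    (1 - (q^2)^2) • (E₂ * E₁^(n+1)) =
      ((1-(q^2)^2) * (q⁻¹^2)^(n+1)) • (E₁^(n+1) * E₂)
        - ((q⁻¹^2)^(n+1) - (q^2)^(n+1)) • (E₁^n * E₃) := by
  induction n with
  | zero =>
    simp only [zero_add, pow_one, pow_zero, one_mul, rel_e2e1]
    match_scalars
    any_goals ring1
    all_goals linear_combination (q^2) * huw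
  | succ n ih =>
    have h1 : E₂ * E₁^(n+1+1) = (E₂ * E₁^(n+1)) * E₁ := by rw [pow_succ, ← mul_assoc]
    rw [h1, ← smul_mul_assoc, ih, sub_mul, smul_mul_assoc, smul_mul_assoc,
      mul_assoc, rel_e2e1, mul_assoc, rel_e3e1 huw]
    simp only [mul_sub, mul_smul_comm, smul_sub, smul_smul, ← mul_assoc, ← pow_succ]
    match_scalars
    any_goals ring1
    all_goals linear_combination ((q⁻¹^2)^(n+1) * q^2) * huw

lemma e1_pow_e2 (huw : q⁻¹ ^ 2 * q ^ 2 = 1) (n : ℕ) :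
    ((q^2-1)^2*(q^2+1)) • (E₁ * E₂^(n+2)) =
      (((q^2-1)^2*(q^2+1)) * (q^2)^(n+2)) • (E₂^(n+2) * E₁)
        + ((q^2-1)*((q^2)^(n+3) - (q⁻¹^2)^(n+1))) • (E₂^(n+1) * E₃)
        + (q^2 + 1 - (q⁻¹^2)^(n+1) - (q^2)^(n+2)) • (E₂^n * Z) := by
  induction n with
  | zero =>
    have h2 : E₁ * E₂^(0+2) = (E₁ * E₂) * E₂ := by
      rw [zero_add, pow_two, ← mul_assoc]
    rw [h2, rel_e1e2 huw, add_mul, smul_mul_assoc, mul_assoc E₂ E₁ E₂, rel_e1e2 huw,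
      rel_e3e2 huw]
    simp only [zero_add, pow_one, pow_zero, one_mul, mul_add, mul_sub, mul_smul_comm,
      smul_add, smul_sub, smul_smul, ← mul_assoc, ← pow_two, ← pow_succ]
    match_scalars
    any_goals ring1
    all_goals first
    | linear_combination ((q^2-1)*q^2) * huw
    | linear_combination (-(q^2)^2 + q^2 + 1) * huw
  | succ n ih =>
    have h1 : E₁ * E₂^(n+1+2) = (E₁ * E₂^(n+2)) * E₂ := by rw [pow_succ, ← mul_assoc]
    rw [h1, ← smul_mul_assoc, ih, add_mul, add_mul, smul_mul_assoc, smul_mul_assoc,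
      smul_mul_assoc, mul_assoc (E₂^(n+2)) E₁ E₂, rel_e1e2 huw,
      mul_assoc (E₂^(n+1)) E₃ E₂, rel_e3e2 huw, mul_assoc (E₂^n) Z E₂, ← rel_e2z]
    simp only [mul_add, mul_sub, mul_smul_comm, smul_add, smul_sub, smul_smul,
      ← mul_assoc, ← pow_succ]
    match_scalars
    any_goals ring1
    all_goals first
    | linear_combination ((q^2-1)*(q^2)^(n+2)) * huw
    | linear_combination (-(q^2)^(n+3) + (q^2)^(n+2) + (q⁻¹^2)^(n+1)) * huw

lemma zpow_center (a : ℕ) : (Z^a : UqB2 K q) ∈ Subalgebra.center K (UqB2 K q) :=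
  pow_mem z_center a

lemma e3_pow_l_center (huw : q⁻¹ ^ 2 * q ^ 2 = 1) {l : ℕ} (hwl : (q^2)^l = 1)
    (hw1 : q^2 - 1 ≠ 0) (hl : 1 ≤ l) :
    (E₃^l : UqB2 K q) ∈ Subalgebra.center K (UqB2 K q) := by
  apply mem_center_of_commutes
  · have h := e3_pow_e1 huw l
    rw [hwl, one_smul] at h
    exact h.symm
  · obtain ⟨n, rfl⟩ : ∃ n, l = n + 1 := ⟨l - 1, (Nat.succ_pred_eq_of_pos hl).symm⟩
    have h := e2_pow_e3 (K := K) (q := q) n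
    rw [hwl, mul_one, sub_self, zero_smul, add_zero] at h
    exact smul_right_injective _ hw1 h
  · exact ((Commute.pow_self E₃ l).symm).eq
  · exact (Subalgebra.mem_center_iff.mp z_center (E₃^l)).symm

lemma e1_pow_l_center (huw : q⁻¹ ^ 2 * q ^ 2 = 1) {l : ℕ} (hwl : (q^2)^l = 1)
    (hul : (q⁻¹^2)^l = 1) (hw2 : 1 - (q^2)^2 ≠ 0) (hl : 1 ≤ l) :
    (E₁^l : UqB2 K q) ∈ Subalgebra.center K (UqB2 K q) := by
  apply mem_center_of_commutes
  · exact ((Commute.pow_self E₁ l).symm).eq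
  · obtain ⟨n, rfl⟩ : ∃ n, l = n + 1 := ⟨l - 1, (Nat.succ_pred_eq_of_pos hl).symm⟩
    have h := e2_pow_e1 huw (K := K) (q := q) n
    rw [hul, hwl, mul_one, sub_self, zero_smul, sub_zero] at h
    exact smul_right_injective _ hw2 h
  · have h := e1_pow_e3 (K := K) (q := q) l
    rw [hul, one_smul] at h
    exact h.symm
  · exact (Subalgebra.mem_center_iff.mp z_center (E₁^l)).symm

lemma e2_pow_l_center (huw : q⁻¹ ^ 2 * q ^ 2 = 1) {l : ℕ} (hwl : (q^2)^l = 1)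
    (hul : (q⁻¹^2)^l = 1) (hul1 : (q⁻¹^2)^(l-1) = q^2) (hw1 : q^2 - 1 ≠ 0)
    (hD : (q^2-1)^2*(q^2+1) ≠ 0) (hl : 2 ≤ l) :
    (E₂^l : UqB2 K q) ∈ Subalgebra.center K (UqB2 K q) := by
  apply mem_center_of_commutes
  · obtain ⟨n, rfl⟩ : ∃ n, l = n + 2 := ⟨l - 2, (Nat.sub_add_cancel hl).symm⟩
    have h := e1_pow_e2 huw (K := K) (q := q) n
    have e1 : (q⁻¹^2)^(n+1) = q^2 := by simpa using hul1
    have e2 : (q^2)^(n+3) = q^2 := by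
      rw [pow_succ, hwl, one_mul]
    rw [hwl, mul_one, e1, e2, sub_self, mul_zero, zero_smul, add_zero] at h
    rw [show q ^ 2 + 1 - q ^ 2 - (1:K) = 0 by ring, zero_smul, add_zero] at h
    exact smul_right_injective _ hD h
  · exact ((Commute.pow_self E₂ l).symm).eq
  · obtain ⟨n, rfl⟩ : ∃ n, l = n + 1 := ⟨l - 1, (Nat.succ_pred_eq_of_pos (by omega)).symm⟩
    have h := e3_pow_e2 huw (K := K) (q := q) n
    rw [hul, mul_one, sub_self, zero_smul, sub_zero] at h
    exact smul_right_injective _ hw1 h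
  · exact (Subalgebra.mem_center_iff.mp z_center (E₂^l)).symm

/-- Span of ordered monomials. -/
def NN (K : Type*) [Field K] (q : K) : Submodule K (UqB2 K q) :=
  Submodule.span K {x | ∃ a b c d : ℕ, x = Uz K q ^a * Ue3 K q ^b * Ue1 K q ^c * Ue2 K q ^d}

lemma mono_mem (a b c d : ℕ) : Z^a * E₃^b * E₁^c * E₂^d ∈ NN K q :=
  Submodule.subset_span ⟨a, b, c, d, rfl⟩

lemma NN_mul_gen {y : UqB2 K q}
    (h : ∀ a b c d : ℕ, (Z^a * E₃^b * E₁^c * E₂^d) * y ∈ NN K q) :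
    ∀ x ∈ NN K q, x * y ∈ NN K q := by
  intro x hx
  induction hx using Submodule.span_induction with
  | mem x hx => obtain ⟨a, b, c, d, rfl⟩ := hx; exact h a b c d
  | zero => rw [zero_mul]; exact zero_mem _
  | add u v _ _ hu hv => rw [add_mul]; exact add_mem hu hv
  | smul r u _ hu => rw [smul_mul_assoc]; exact Submodule.smul_mem _ _ hu

lemma NN_mul_e2 {x : UqB2 K q} (hx : x ∈ NN K q) : x * E₂ ∈ NN K q := by
  refine NN_mul_gen (fun a b c d => ?_) x hx
  rw [mul_assoc, ← pow_succ]
  exact mono_mem a b c d.succ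

lemma mono_mul_z (a b c d : ℕ) : (Z^a * E₃^b * E₁^c * E₂^d) * Z ∈ NN K q := by
  rw [Subalgebra.mem_center_iff.mp z_center (Z^a * E₃^b * E₁^c * E₂^d),
    ← mul_assoc, ← mul_assoc, ← mul_assoc, ← pow_succ']
  exact mono_mem (a+1) b c d

lemma mono_mul_e3 (huw : q⁻¹ ^ 2 * q ^ 2 = 1) :
    ∀ d a b c : ℕ, (Z^a * E₃^b * E₁^c * E₂^d) * E₃ ∈ NN K q := by
  intro d
  induction d with
  | zero =>
    intro a b c
    have key : (Z^a * E₃^b * E₁^c * E₂^0) * E₃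
        = (q⁻¹^2)^c • (Z^a * E₃^(b+1) * E₁^c * E₂^0) := by
      simp only [pow_zero, mul_one, mul_assoc]
      rw [e1_pow_e3, mul_smul_comm, mul_smul_comm, ← mul_assoc (E₃^b), ← pow_succ]
    rw [key]
    exact Submodule.smul_mem _ _ (mono_mem a (b+1) c 0)
  | succ d ih =>
    intro a b c
    have hm : Z^a * E₃^b * E₁^c * E₂^(d+1) = (Z^a * E₃^b * E₁^c * E₂^d) * E₂ := by
      rw [mul_assoc (Z^a * E₃^b * E₁^c), ← pow_succ]
    have key : (Z^a * E₃^b * E₁^c * E₂^(d+1)) * E₃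
        = q^2 • (((Z^a * E₃^b * E₁^c * E₂^d) * E₃) * E₂)
          + (Z^a * E₃^b * E₁^c * E₂^d) * Z := by
      rw [hm, mul_assoc _ E₂ E₃, rel_e2e3, mul_add, mul_smul_comm, ← mul_assoc _ E₃ E₂]
    rw [key]
    exact add_mem (Submodule.smul_mem _ _ (NN_mul_e2 (ih a b c))) (mono_mul_z a b c d)

lemma mono_mul_e1 (huw : q⁻¹ ^ 2 * q ^ 2 = 1) :
    ∀ d a b c : ℕ, (Z^a * E₃^b * E₁^c * E₂^d) * E₁ ∈ NN K q := by
  intro d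
  induction d with
  | zero =>
    intro a b c
    have key : (Z^a * E₃^b * E₁^c * E₂^0) * E₁ = Z^a * E₃^b * E₁^(c+1) * E₂^0 := by
      simp only [pow_zero, mul_one]
      rw [mul_assoc, ← pow_succ]
    rw [key]
    exact mono_mem a b (c+1) 0
  | succ d ih =>
    intro a b c
    have hm : Z^a * E₃^b * E₁^c * E₂^(d+1) = (Z^a * E₃^b * E₁^c * E₂^d) * E₂ := by
      rw [mul_assoc (Z^a * E₃^b * E₁^c), ← pow_succ]
    have key : (Z^a * E₃^b * E₁^c * E₂^(d+1)) * E₁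
        = q⁻¹^2 • (((Z^a * E₃^b * E₁^c * E₂^d) * E₁) * E₂)
          - q⁻¹^2 • ((Z^a * E₃^b * E₁^c * E₂^d) * E₃) := by
      rw [hm, mul_assoc _ E₂ E₁, rel_e2e1, mul_sub, mul_smul_comm, mul_smul_comm,
        ← mul_assoc _ E₁ E₂]
    rw [key]
    exact sub_mem (Submodule.smul_mem _ _ (NN_mul_e2 (ih a b c)))
      (Submodule.smul_mem _ _ (mono_mul_e3 huw d a b c))

lemma NN_eq_top (huw : q⁻¹ ^ 2 * q ^ 2 = 1) : NN K q = ⊤ := by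
  have key : ∀ y : UqB2 K q, ∀ x ∈ NN K q, x * y ∈ NN K q := by
    intro y
    have hy : y ∈ Algebra.adjoin K ({E₁, E₂, E₃, Z} : Set (UqB2 K q)) := by
      rw [adjoin_gens_eq_top]; trivial
    induction hy using Algebra.adjoin_induction with
    | mem a ha =>
      rcases ha with rfl | rfl | rfl | rfl
      · exact NN_mul_gen (fun a b c d => mono_mul_e1 huw d a b c)
      · exact fun x hx => NN_mul_e2 hx
      · exact NN_mul_gen (fun a b c d => mono_mul_e3 huw d a b c)
      · exact NN_mul_gen mono_mul_z
    | algebraMap r =>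
      intro x hx
      rw [← Algebra.commutes, ← Algebra.smul_def]
      exact Submodule.smul_mem _ _ hx
    | add a b _ _ ha hb =>
      intro x hx
      rw [mul_add]
      exact add_mem (ha x hx) (hb x hx)
    | mul a b _ _ ha hb =>
      intro x hx
      rw [← mul_assoc]
      exact hb _ (ha x hx)
  rw [eq_top_iff]
  rintro x -
  simpa using key x 1 (by simpa using mono_mem 0 0 0 0)

lemma central_pull {p : UqB2 K q} (hp : p ∈ Subalgebra.center K (UqB2 K q))
    (x y : UqB2 K q) : x * (p * y) = p * (x * y) := by
  rw [← mul_assoc, Subalgebra.mem_center_iff.mp hp x, mul_assoc]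

lemma central_shuffle {R : Type*} [Semiring R] (p1 A3 A1 A2 y3 y1 y2 : R)
    (hA1 : ∀ x y : R, x * (A1 * y) = A1 * (x * y))
    (hA2 : ∀ x y : R, x * (A2 * y) = A2 * (x * y)) :
    p1 * (A3 * y3) * (A1 * y1) * (A2 * y2) = p1 * A3 * A1 * A2 * (y3 * (y1 * y2)) := by
  simp only [mul_assoc]
  rw [hA1 y3 (y1 * (A2 * y2)), hA2 y1 y2, hA2 y3 (y1 * y2)]

end Stmt3Aux

open Stmt3Aux in
open Pointwise in
/-- Let `P` be the `K`-subalgebra of `U_q^+(B_2)` generated by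
`e1^l, e2^l, e3^l, z`. Then `P` is contained in the center, and `U_q^+(B_2)` is spanned
as a `P`-module by the monomials `e3^b·e1^c·e2^d` with `0 ≤ b, c, d ≤ l-1` (equivalently,
it is the `K`-span of the set of products of an element of `P` and such a monomial). -/
theorem stmt3 (m : ℕ) (hm : 5 ≤ m) (hq : IsPrimitiveRoot q m)
    (l : ℕ) (hl : l = if Odd m then m else m / 2) :
    Algebra.adjoin K ({Ue1 K q ^ l, Ue2 K q ^ l, Ue3 K q ^ l, Uz K q} : Set (UqB2 K q)) ≤
        Subalgebra.center K (UqB2 K q) ∧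
    Submodule.span K
        ((Algebra.adjoin K ({Ue1 K q ^ l, Ue2 K q ^ l, Ue3 K q ^ l, Uz K q} :
            Set (UqB2 K q)) : Set (UqB2 K q)) *
          {x : UqB2 K q | ∃ b c d : ℕ, b ≤ l - 1 ∧ c ≤ l - 1 ∧ d ≤ l - 1 ∧
            x = Ue3 K q ^ b * Ue1 K q ^ c * Ue2 K q ^ d}) = ⊤ := by

  -- scalar facts
  have hm0 : m ≠ 0 := by omega
  have hq0 : q ≠ 0 := hq.ne_zero hm0
  have huw : q⁻¹ ^ 2 * q ^ 2 = 1 := by rw [← mul_pow, inv_mul_cancel₀ hq0, one_pow]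
  have hdvd : ∀ k, q ^ k = 1 ↔ m ∣ k := fun k => by
    constructor
    · exact fun h => hq.dvd_of_pow_eq_one k h
    · rintro ⟨t, rfl⟩; rw [pow_mul, hq.pow_eq_one, one_pow]
  have hl2 : 2 ≤ l := by
    rw [hl]; split_ifs <;> omega
  have hwl : (q ^ 2) ^ l = 1 := by
    rw [← pow_mul, hdvd, hl]
    split_ifs with hodd
    · exact ⟨2, by ring⟩
    · rw [Nat.not_odd_iff_even] at hodd
      obtain ⟨t, rfl⟩ := hodd
      exact ⟨1, by omega⟩
  have hul : (q⁻¹ ^ 2) ^ l = 1 := by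
    rw [inv_pow, inv_pow, hwl, inv_one]
  have hne2 : q ^ 2 ≠ 1 := fun h => by
    have := Nat.le_of_dvd (by norm_num) ((hdvd 2).mp h); omega
  have hne4 : (q ^ 2) ^ 2 ≠ 1 := fun h => by
    rw [← pow_mul] at h
    have := Nat.le_of_dvd (by norm_num) ((hdvd 4).mp h); omega
  have hw1 : q ^ 2 - 1 ≠ 0 := sub_ne_zero.mpr hne2
  have hw2 : 1 - (q ^ 2) ^ 2 ≠ 0 := sub_ne_zero.mpr fun h => hne4 h.symm
  have hp1 : q ^ 2 + 1 ≠ 0 := fun h => by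
    have h2 : q ^ 2 = -1 := by linear_combination h
    apply hne4; rw [h2]; ring
  have hD : (q ^ 2 - 1) ^ 2 * (q ^ 2 + 1) ≠ 0 := mul_ne_zero (pow_ne_zero _ hw1) hp1
  have hul1 : (q⁻¹ ^ 2) ^ (l - 1) = q ^ 2 := by
    have h : (q⁻¹ ^ 2) ^ (l - 1) * (q⁻¹ ^ 2) = 1 := by
      rw [← pow_succ, Nat.sub_add_cancel (by omega), hul]
    calc (q⁻¹ ^ 2) ^ (l - 1) = (q⁻¹ ^ 2) ^ (l - 1) * (q⁻¹ ^ 2 * q ^ 2) := by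
          rw [huw, mul_one]
      _ = ((q⁻¹ ^ 2) ^ (l - 1) * q⁻¹ ^ 2) * q ^ 2 := by ring
      _ = q ^ 2 := by rw [h, one_mul]
  -- centrality of the four generators of P
  have hc1 := e1_pow_l_center (K := K) (q := q) huw hwl hul hw2 (by omega)
  have hc2 := e2_pow_l_center (K := K) (q := q) huw hwl hul hul1 hw1 hD hl2
  have hc3 := e3_pow_l_center (K := K) (q := q) huw hwl hw1 (by omega)
  have hcz := z_center (K := K) (q := q)
  have hle : Algebra.adjoin K ({Ue1 K q ^ l, Ue2 K q ^ l, Ue3 K q ^ l, Uz K q} :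
      Set (UqB2 K q)) ≤ Subalgebra.center K (UqB2 K q) := by
    apply Algebra.adjoin_le
    intro x hx
    simp only [Set.mem_insert_iff, Set.mem_singleton_iff] at hx
    rcases hx with rfl | rfl | rfl | rfl
    exacts [hc1, hc2, hc3, hcz]
  refine ⟨hle, ?_⟩
  -- the spanning statement
  have hNle : NN K q ≤ Submodule.span K
      ((Algebra.adjoin K ({Ue1 K q ^ l, Ue2 K q ^ l, Ue3 K q ^ l, Uz K q} :
          Set (UqB2 K q)) : Set (UqB2 K q)) *
        {x : UqB2 K q | ∃ b c d : ℕ, b ≤ l - 1 ∧ c ≤ l - 1 ∧ d ≤ l - 1 ∧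
          x = Ue3 K q ^ b * Ue1 K q ^ c * Ue2 K q ^ d}) := by
    rw [NN, Submodule.span_le]
    rintro x ⟨a, b, c, d, rfl⟩
    have hb : Ue3 K q ^ b = (Ue3 K q ^ l) ^ (b / l) * Ue3 K q ^ (b % l) := by
      rw [← pow_mul, ← pow_add, Nat.div_add_mod]
    have hc : Ue1 K q ^ c = (Ue1 K q ^ l) ^ (c / l) * Ue1 K q ^ (c % l) := by
      rw [← pow_mul, ← pow_add, Nat.div_add_mod]
    have hd : Ue2 K q ^ d = (Ue2 K q ^ l) ^ (d / l) * Ue2 K q ^ (d % l) := by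
      rw [← pow_mul, ← pow_add, Nat.div_add_mod]
    have hshuf : Uz K q ^ a * Ue3 K q ^ b * Ue1 K q ^ c * Ue2 K q ^ d
        = (Uz K q ^ a * (Ue3 K q ^ l) ^ (b / l) * (Ue1 K q ^ l) ^ (c / l)
            * (Ue2 K q ^ l) ^ (d / l))
          * (Ue3 K q ^ (b % l) * (Ue1 K q ^ (c % l) * Ue2 K q ^ (d % l))) := by
      rw [hb, hc, hd]
      exact central_shuffle _ _ _ _ _ _ _
        (central_pull (pow_mem hc1 _)) (central_pull (pow_mem hc2 _))
    rw [hshuf]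
    apply Submodule.subset_span
    refine Set.mul_mem_mul ?_ ?_
    · refine mul_mem (mul_mem (mul_mem (pow_mem ?_ a) (pow_mem ?_ _)) (pow_mem ?_ _))
        (pow_mem ?_ _)
      · exact Algebra.subset_adjoin (by right; right; right; rfl)
      · exact Algebra.subset_adjoin (by right; right; left; rfl)
      · exact Algebra.subset_adjoin (by left; rfl)
      · exact Algebra.subset_adjoin (by right; left; rfl)
    · exact ⟨b % l, c % l, d % l,
        Nat.le_sub_one_of_lt (Nat.mod_lt _ (by omega)),
        Nat.le_sub_one_of_lt (Nat.mod_lt _ (by omega)),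
        Nat.le_sub_one_of_lt (Nat.mod_lt _ (by omega)),
        (mul_assoc _ _ _).symm⟩
  rw [eq_top_iff]
  exact le_trans (le_of_eq (NN_eq_top huw).symm) hNle
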